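/- Let T > 0. For i = 1, 2, let ψ^i, φ^i : [0,T] × ℝ → ℝ be continuous functions such that ψ^i(t,·) and φ^i(t,·) are strictly increasing for every t ∈ [0,T], and assume ψ^1(t,x) ≤ ψ^2(t,x) and φ^1(t,x) ≤ φ^2(t,x) for all (t,x) ∈ [0,T] × ℝ. For i = 1, 2, let A^{R,i}, A^{L,i} ∈ I[0,T], set A^i := A^{R,i} − A^{L,i} and y^i(t) := A^i(T) − A^i(t), and assume: ψ^i(t, y^i(t)) ≤ 0 ≤ φ^i(t, y^i(t)) for all t ∈ [0,T]; ∫_0^T φ^i(t, y^i(t)) dA^{R,i}(t) = 0 and ∫_0^T ψ^i(t, y^i(t)) dA^{L,i}(t) = 0. Then A^2(T) − A^2(t) ≤ A^1(T) − A^1(t) for all t ∈ [0,T]. -/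

import Mathlib

open MeasureTheory Set

/-- `I[0,T]`: continuous nondecreasing functions on `[0,T]` vanishing at `0`,
encoded as their constant extension to all of `ℝ`. -/
structure IFun (T : ℝ) where
  toFun : ℝ → ℝ
  mono : Monotone toFun
  cont : Continuous toFun
  zero_left : ∀ t ≤ (0 : ℝ), toFun t = 0
  const_right : ∀ t, T ≤ t → toFun t = toFun T

/-- The Stieltjes function associated with an element of `I[0,T]`. -/
noncomputable def IFun.stieltjes {T : ℝ} (k : IFun T) : StieltjesFunction ℝ where
  toFun := k.toFun
  mono' := k.mono
  right_continuous' := fun _ => k.cont.continuousAt.continuousWithinAt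

/-- The Lebesgue–Stieltjes measure induced by an element of `I[0,T]`. -/
noncomputable def IFun.measure {T : ℝ} (k : IFun T) : Measure ℝ := k.stieltjes.measure

/-- The "backward remainder" `t ↦ A(T) - A(t)` of `A = A^R - A^L`. -/
noncomputable def backRem (T : ℝ) (AR AL : IFun T) : ℝ → ℝ :=
  fun t => (AR.toFun T - AL.toFun T) - (AR.toFun t - AL.toFun t)

/-!
Suppose `y¹(t₀) < y²(t₀)` and let `s` be the first zero of `y² - y¹` after `t₀` (both vanish
at `T`). On `(t₀, s)` we have `y¹ < y²`, so strict monotonicity and the ordering of the barriers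
give `φ²(t, y²) > φ¹(t, y¹) ≥ 0` and `ψ¹(t, y¹) < ψ²(t, y²) ≤ 0`. The Skorokhod conditions then
force `A^{R,2}` and `A^{L,1}` to be constant on `[t₀, s]`, so `y²` can only increase and `y¹`
can only decrease there: `y²(t₀) ≤ y²(s) = y¹(s) ≤ y¹(t₀)`, a contradiction.
-/

theorem measure_eq_zero_of_setIntegral_eq_zero {α : Type*} [MeasurableSpace α] {μ : Measure α}
    {g : α → ℝ} {s u : Set α} (hs : MeasurableSet s) (hg : IntegrableOn g s μ)
    (hg0 : ∀ x ∈ s, 0 ≤ g x) (hint : ∫ x in s, g x ∂μ = 0) (hu : u ⊆ s)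
    (hpos : ∀ x ∈ u, 0 < g x) : μ u = 0 := by
  have hsupp : μ (Function.support g ∩ s) = 0 := by
    by_contra h
    exact ((setIntegral_pos_iff_support_of_nonneg_ae (ae_restrict_of_forall_mem hs hg0) hg).2
      (pos_iff_ne_zero.2 h)).ne' hint
  exact measure_mono_null (subset_inter (fun x hx => (hpos x hx).ne') hu) hsupp

theorem IFun.measure_Ioo {T : ℝ} (k : IFun T) (a b : ℝ) :
    k.measure (Ioo a b) = ENNReal.ofReal (k.toFun b - k.toFun a) := by
  have hleft : Function.leftLim k.toFun b = k.toFun b :=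
    leftLim_eq_of_tendsto ((k.cont.tendsto b).mono_left nhdsWithin_le_nhds)
  rw [IFun.measure, StieltjesFunction.measure_Ioo]
  exact congrArg (fun x => ENNReal.ofReal (x - k.toFun a)) hleft

theorem IFun.toFun_eq_of_setIntegral_eq_zero {T : ℝ} (k : IFun T) {g : ℝ → ℝ}
    (hg : ContinuousOn g (Icc 0 T)) (hg0 : ∀ t ∈ Icc 0 T, 0 ≤ g t)
    (hint : ∫ t in Icc 0 T, g t ∂k.measure = 0) {a b : ℝ} (hab : a ≤ b)
    (hsub : Ioo a b ⊆ Icc 0 T) (hpos : ∀ t ∈ Ioo a b, 0 < g t) :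
    k.toFun b = k.toFun a := by
  have : IsLocallyFiniteMeasure k.measure := by unfold IFun.measure; infer_instance
  have hnull := measure_eq_zero_of_setIntegral_eq_zero measurableSet_Icc
    (hg.integrableOn_compact isCompact_Icc) hg0 hint hsub hpos
  rw [k.measure_Ioo, ENNReal.ofReal_eq_zero] at hnull
  linarith [k.mono hab]

theorem exists_first_zero_of_pos {f : ℝ → ℝ} {a b : ℝ} (hab : a ≤ b)
    (hf : ContinuousOn f (Icc a b)) (ha : 0 < f a) (hb : f b ≤ 0) :
    ∃ c ∈ Ioc a b, f c = 0 ∧ ∀ t ∈ Ico a c, 0 < f t := by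
  set S := Icc a b ∩ f ⁻¹' Iic 0
  have hSc : IsClosed S := hf.preimage_isClosed_of_isClosed isClosed_Icc isClosed_Iic
  have hSne : S.Nonempty := ⟨b, ⟨⟨hab, le_rfl⟩, hb⟩⟩
  have hSbdd : BddBelow S := ⟨a, fun x hx => hx.1.1⟩
  have hcS : sInf S ∈ S := hSc.csInf_mem hSne hSbdd
  have hpos : ∀ t ∈ Ico a (sInf S), 0 < f t := fun t ht => by
    by_contra! hft
    exact ht.2.not_ge (csInf_le hSbdd ⟨⟨ht.1, ht.2.le.trans hcS.1.2⟩, hft⟩)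
  -- a zero of `f` on `[a, sInf S]` (intermediate value theorem) lies in `S`, hence at `sInf S`
  obtain ⟨d, hd, hfd⟩ := intermediate_value_Icc' hcS.1.1 (hf.mono (Icc_subset_Icc le_rfl hcS.1.2))
    ⟨hcS.2, ha.le⟩
  have hdS : d ∈ S := ⟨⟨hd.1, hd.2.trans hcS.1.2⟩, hfd.le⟩
  have hzero : f (sInf S) = 0 := le_antisymm hd.2 (csInf_le hSbdd hdS) ▸ hfd
  refine ⟨sInf S, ⟨lt_of_le_of_ne hcS.1.1 fun h => ?_, hcS.1.2⟩, hzero, hpos⟩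
  exact ha.ne' (h ▸ hzero)

theorem continuous_backRem (T : ℝ) (AR AL : IFun T) : Continuous (backRem T AR AL) :=
  continuous_const.sub (AR.cont.sub AL.cont)

theorem backRem_le_of_toFun_eq_right {T a b : ℝ} {AR AL : IFun T} (hab : a ≤ b)
    (hR : AR.toFun b = AR.toFun a) : backRem T AR AL a ≤ backRem T AR AL b := by
  simp only [backRem]
  linarith [AL.mono hab]

theorem backRem_le_of_toFun_eq_left {T a b : ℝ} {AR AL : IFun T} (hab : a ≤ b)
    (hL : AL.toFun b = AL.toFun a) : backRem T AR AL b ≤ backRem T AR AL a := by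
  simp only [backRem]
  linarith [AR.mono hab]

theorem ContinuousOn.comp_prodMk_right {φ : ℝ → ℝ → ℝ} {s : Set ℝ}
    (hφ : ContinuousOn (fun p : ℝ × ℝ => φ p.1 p.2) (s ×ˢ univ)) {y : ℝ → ℝ}
    (hy : Continuous y) : ContinuousOn (fun t => φ t (y t)) s :=
  hφ.comp (continuous_id.prodMk hy).continuousOn fun _ ht => ⟨ht, mem_univ _⟩

theorem stmt10_general (T : ℝ) (φ₁ ψ₁ φ₂ ψ₂ : ℝ → ℝ → ℝ)
    (hψ₁c : ContinuousOn (fun p : ℝ × ℝ => ψ₁ p.1 p.2) (Icc 0 T ×ˢ univ))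
    (hφ₂c : ContinuousOn (fun p : ℝ × ℝ => φ₂ p.1 p.2) (Icc 0 T ×ˢ univ))
    (hψ₁m : ∀ t ∈ Icc (0 : ℝ) T, StrictMono (ψ₁ t))
    (hφ₂m : ∀ t ∈ Icc (0 : ℝ) T, StrictMono (φ₂ t))
    (hψle : ∀ t ∈ Icc (0 : ℝ) T, ∀ x : ℝ, ψ₁ t x ≤ ψ₂ t x)
    (hφle : ∀ t ∈ Icc (0 : ℝ) T, ∀ x : ℝ, φ₁ t x ≤ φ₂ t x)
    (AR₁ AL₁ AR₂ AL₂ : IFun T)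
    (hcon₁ : ∀ t ∈ Icc (0 : ℝ) T,
      ψ₁ t (backRem T AR₁ AL₁ t) ≤ 0 ∧ 0 ≤ φ₁ t (backRem T AR₁ AL₁ t))
    (hcon₂ : ∀ t ∈ Icc (0 : ℝ) T,
      ψ₂ t (backRem T AR₂ AL₂ t) ≤ 0 ∧ 0 ≤ φ₂ t (backRem T AR₂ AL₂ t))
    (hskL₁ : (∫ t in Icc 0 T, ψ₁ t (backRem T AR₁ AL₁ t) ∂AL₁.measure) = 0)
    (hskR₂ : (∫ t in Icc 0 T, φ₂ t (backRem T AR₂ AL₂ t) ∂AR₂.measure) = 0) :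
    ∀ t ∈ Icc (0 : ℝ) T, backRem T AR₂ AL₂ t ≤ backRem T AR₁ AL₁ t := by
  intro t₀ ht₀
  by_contra! hlt
  obtain ⟨s, hs, hzero, hpos⟩ := exists_first_zero_of_pos ht₀.2
    ((continuous_backRem T AR₂ AL₂).sub (continuous_backRem T AR₁ AL₁)).continuousOn
    (sub_pos.2 hlt) (by simp [backRem])
  have hsub : Ioo t₀ s ⊆ Icc 0 T := fun t ht => ⟨ht₀.1.trans ht.1.le, ht.2.le.trans hs.2⟩
  have hgap : ∀ t ∈ Ioo t₀ s, backRem T AR₁ AL₁ t < backRem T AR₂ AL₂ t :=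
    fun t ht => sub_pos.1 (hpos t (Ioo_subset_Ico_self ht))
  have hR₂ : AR₂.toFun s = AR₂.toFun t₀ :=
    AR₂.toFun_eq_of_setIntegral_eq_zero (hφ₂c.comp_prodMk_right (continuous_backRem T AR₂ AL₂))
      (fun t ht => (hcon₂ t ht).2) hskR₂ hs.1.le hsub fun t ht =>
      calc (0 : ℝ) ≤ φ₁ t (backRem T AR₁ AL₁ t) := (hcon₁ t (hsub ht)).2
        _ ≤ φ₂ t (backRem T AR₁ AL₁ t) := hφle t (hsub ht) _
        _ < φ₂ t (backRem T AR₂ AL₂ t) := hφ₂m t (hsub ht) (hgap t ht)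
  have hL₁ : AL₁.toFun s = AL₁.toFun t₀ :=
    AL₁.toFun_eq_of_setIntegral_eq_zero (g := fun t => -ψ₁ t (backRem T AR₁ AL₁ t))
      (hψ₁c.comp_prodMk_right (continuous_backRem T AR₁ AL₁)).neg
      (fun t ht => neg_nonneg.2 (hcon₁ t ht).1) (by rw [integral_neg, hskL₁, neg_zero])
      hs.1.le hsub fun t ht => neg_pos.2 <|
      calc ψ₁ t (backRem T AR₁ AL₁ t) < ψ₁ t (backRem T AR₂ AL₂ t) := hψ₁m t (hsub ht) (hgap t ht)
        _ ≤ ψ₂ t (backRem T AR₂ AL₂ t) := hψle t (hsub ht) _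
        _ ≤ 0 := (hcon₂ t (hsub ht)).1
  have h₂ := backRem_le_of_toFun_eq_right (AL := AL₂) hs.1.le hR₂
  have h₁ := backRem_le_of_toFun_eq_left (AR := AR₁) hs.1.le hL₁
  linarith [sub_eq_zero.1 hzero]

/-- comparison with respect to the boundary functions: if
`ψ¹ ≤ ψ²` and `φ¹ ≤ φ²` pointwise and, for `i = 1,2`,
`yⁱ(t) = Aⁱ(T) - Aⁱ(t)` satisfies the constraints and the Skorokhod conditions
for `(ψⁱ,φⁱ)`, then `A²(T) - A²(t) ≤ A¹(T) - A¹(t)` for all `t ∈ [0,T]`. -/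
theorem stmt10 (T : ℝ) (hT : 0 < T) (φ₁ ψ₁ φ₂ ψ₂ : ℝ → ℝ → ℝ)
    (hφ₁c : ContinuousOn (fun p : ℝ × ℝ => φ₁ p.1 p.2) (Icc 0 T ×ˢ univ))
    (hψ₁c : ContinuousOn (fun p : ℝ × ℝ => ψ₁ p.1 p.2) (Icc 0 T ×ˢ univ))
    (hφ₂c : ContinuousOn (fun p : ℝ × ℝ => φ₂ p.1 p.2) (Icc 0 T ×ˢ univ))
    (hψ₂c : ContinuousOn (fun p : ℝ × ℝ => ψ₂ p.1 p.2) (Icc 0 T ×ˢ univ))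
    (hφ₁m : ∀ t ∈ Icc (0 : ℝ) T, StrictMono (φ₁ t))
    (hψ₁m : ∀ t ∈ Icc (0 : ℝ) T, StrictMono (ψ₁ t))
    (hφ₂m : ∀ t ∈ Icc (0 : ℝ) T, StrictMono (φ₂ t))
    (hψ₂m : ∀ t ∈ Icc (0 : ℝ) T, StrictMono (ψ₂ t))
    (hψle : ∀ t ∈ Icc (0 : ℝ) T, ∀ x : ℝ, ψ₁ t x ≤ ψ₂ t x)
    (hφle : ∀ t ∈ Icc (0 : ℝ) T, ∀ x : ℝ, φ₁ t x ≤ φ₂ t x)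
    (AR₁ AL₁ AR₂ AL₂ : IFun T)
    (hcon₁ : ∀ t ∈ Icc (0 : ℝ) T,
      ψ₁ t (backRem T AR₁ AL₁ t) ≤ 0 ∧ 0 ≤ φ₁ t (backRem T AR₁ AL₁ t))
    (hcon₂ : ∀ t ∈ Icc (0 : ℝ) T,
      ψ₂ t (backRem T AR₂ AL₂ t) ≤ 0 ∧ 0 ≤ φ₂ t (backRem T AR₂ AL₂ t))
    (hskR₁ : (∫ t in Icc 0 T, φ₁ t (backRem T AR₁ AL₁ t) ∂AR₁.measure) = 0)
    (hskL₁ : (∫ t in Icc 0 T, ψ₁ t (backRem T AR₁ AL₁ t) ∂AL₁.measure) = 0)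
    (hskR₂ : (∫ t in Icc 0 T, φ₂ t (backRem T AR₂ AL₂ t) ∂AR₂.measure) = 0)
    (hskL₂ : (∫ t in Icc 0 T, ψ₂ t (backRem T AR₂ AL₂ t) ∂AL₂.measure) = 0) :
    ∀ t ∈ Icc (0 : ℝ) T, backRem T AR₂ AL₂ t ≤ backRem T AR₁ AL₁ t :=
  stmt10_general T φ₁ ψ₁ φ₂ ψ₂ hψ₁c hφ₂c hψ₁m hφ₂m hψle hφle AR₁ AL₁ AR₂ AL₂ hcon₁ hcon₂ hskL₁ hskR₂
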